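/- arXiv:2505.23787 — 5 statements merged into one kernel-verified Lean document; each statement's English description precedes it below -/
import Mathlib

section
/- For all natural numbers x and y, x - y (truncated subtraction) equals ((2^(x+y) + x) mod (2^(x+y) + y)) mod (2^(x+y) + x). -/
theorem stmt1 : ∀ x y : ℕ,
    x - y = ((2 ^ (x + y) + x) % (2 ^ (x + y) + y)) % (2 ^ (x + y) + x) := by
  intro x y
  rcases le_or_gt y x with h | h
  · have hp : x < 2 ^ (x + y) := lt_of_lt_of_le (Nat.lt_two_pow_self (n := x))
      (Nat.pow_le_pow_right (by norm_num) (Nat.le_add_right x y))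
    have h1 : (2 ^ (x + y) + x) % (2 ^ (x + y) + y) = x - y := by
      have : 2 ^ (x + y) + x = (2 ^ (x + y) + y) + (x - y) := by omega
      rw [this, Nat.add_mod_left, Nat.mod_eq_of_lt (by omega)]
    rw [h1, Nat.mod_eq_of_lt (by omega)]
  · rw [Nat.mod_eq_of_lt (show 2 ^ (x + y) + x < 2 ^ (x + y) + y by omega), Nat.mod_self]
    omega
end

section
/- For all natural numbers x and y, ⌊x / y⌋ = (2*(x+1)*(x - (x mod y))) mod (2*(x+1)*y - 1), where subtraction is truncated subtraction and division is integer division with ⌊x/0⌋ = 0. -/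
theorem stmt2 : ∀ x y : ℕ,
    x / y = (2 * (x + 1) * (x - x % y)) % (2 * (x + 1) * y - 1) := by
  intro x y
  rcases Nat.eq_zero_or_pos y with h | h
  · simp [h]
  · have h1 : x - x % y = y * (x / y) := by
      have := Nat.mod_add_div x y
      omega
    set q := x / y with hq
    set N := 2 * (x + 1) * y - 1 with hN
    have hk : 2 * (x + 1) * y = N + 1 := by
      have : 1 ≤ 2 * (x + 1) * y := Nat.one_le_iff_ne_zero.mpr (by positivity)
      omega
    have hqN : q < N := by
      have hqx : q ≤ x := Nat.div_le_self x y
      have : 2 * (x + 1) ≤ 2 * (x + 1) * y := Nat.le_mul_of_pos_right _ h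
      omega
    rw [h1, ← mul_assoc, hk, add_mul, one_mul, Nat.mul_add_mod,
      Nat.mod_eq_of_lt hqN]
end

section
/- Let S be the smallest set of functions ℕ → ℕ containing all constant functions and the identity, closed under the operations f ↦ (x ↦ 2^(f x)) and (f, g) ↦ (x ↦ f x mod g x). Then for every t ∈ S there exists a natural number B such that for every natural number a, either t a is a power of two or t a ≤ max B a. -/
inductive S : (ℕ → ℕ) → Prop
  | const (c : ℕ) : S (fun _ => c)
  | id : S (fun x => x)
  | exp {f : ℕ → ℕ} : S f → S (fun x => 2 ^ f x)
  | mod {f g : ℕ → ℕ} : S f → S g → S (fun x => f x % g x)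

theorem stmt5 : ∀ t : ℕ → ℕ, S t →
    ∃ B : ℕ, ∀ a : ℕ, (∃ k : ℕ, t a = 2 ^ k) ∨ t a ≤ max B a := by
  intro t ht
  induction ht with
  | const c => exact ⟨c, fun a => Or.inr (le_max_of_le_left le_rfl)⟩
  | id => exact ⟨0, fun a => Or.inr (le_max_right _ _)⟩
  | exp hf ih => exact ⟨0, fun a => Or.inl ⟨_, rfl⟩⟩
  | @mod f g hf hg ihf ihg =>
    obtain ⟨Bf, hBf⟩ := ihf
    obtain ⟨Bg, hBg⟩ := ihg
    refine ⟨max Bf Bg, fun a => ?_⟩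
    simp only
    rcases Nat.eq_zero_or_pos (g a) with hg0 | hg0
    · rw [hg0, Nat.mod_zero]
      rcases hBf a with ⟨k, hk⟩ | h
      · exact Or.inl ⟨k, hk⟩
      · exact Or.inr (le_trans h (max_le_max (le_max_left _ _) le_rfl))
    · rcases hBf a with ⟨k, hk⟩ | h
      · rcases hBg a with ⟨j, hj⟩ | h'
        · rw [hk, hj]
          rcases lt_or_ge k j with hkj | hkj
          · exact Or.inl ⟨k, Nat.mod_eq_of_lt (Nat.pow_lt_pow_right one_lt_two hkj)⟩
          · right
            rw [Nat.mod_eq_zero_of_dvd (pow_dvd_pow 2 hkj)]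
            exact Nat.zero_le _
        · exact Or.inr (le_trans (le_of_lt (Nat.mod_lt _ hg0))
            (le_trans h' (max_le_max (le_max_right _ _) le_rfl)))
      · exact Or.inr (le_trans (le_trans (Nat.mod_le _ _) h)
          (max_le_max (le_max_left _ _) le_rfl))
end

section
/- Let S be the smallest set of functions ℕ → ℕ containing all constant functions and the identity, closed under the operations f ↦ (x ↦ 2^(f x)) and (f, g) ↦ (x ↦ f x mod g x). Then the successor function x ↦ x + 1 is not in S. -/
lemma key : ∀ {f : ℕ → ℕ}, S f → {x : ℕ | x < f x ∧ ¬ ∃ k, f x = 2 ^ k}.Finite := by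
  intro f hf
  induction hf with
  | const c =>
      apply Set.Finite.subset (Set.finite_Icc 0 c)
      rintro x ⟨h, -⟩
      have hx : x < c := h
      simp only [Set.mem_Icc]
      omega
  | id =>
      convert Set.finite_empty
      ext x; simp
  | exp hf ih =>
      convert Set.finite_empty
      ext x
      simp only [Set.mem_setOf_eq, Set.mem_empty_iff_false, iff_false, not_and]
      intro _ h
      exact h ⟨_, rfl⟩
  | @mod f g hf hg ihf ihg =>
      apply Set.Finite.subset (ihf.union ihg)
      rintro x ⟨hlt, hnp⟩
      simp only [Set.mem_setOf_eq] at hlt hnp ⊢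
      rcases Nat.eq_zero_or_pos (g x) with hg0 | hg0
      · left
        rw [hg0, Nat.mod_zero] at hlt hnp
        exact ⟨hlt, hnp⟩
      · have hfx : x < f x := lt_of_lt_of_le hlt (Nat.mod_le _ _)
        have hgx : x < g x := lt_of_lt_of_le hlt (le_of_lt (Nat.mod_lt _ hg0))
        by_cases hpf : ∃ j, f x = 2 ^ j
        · by_cases hpg : ∃ k, g x = 2 ^ k
          · exfalso
            obtain ⟨j, hj⟩ := hpf
            obtain ⟨k, hk⟩ := hpg
            rw [hj, hk] at hlt hnp
            rcases le_or_gt k j with hkj | hkj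
            · have : (2 : ℕ) ^ j % 2 ^ k = 0 :=
                Nat.mod_eq_zero_of_dvd (pow_dvd_pow 2 hkj)
              omega
            · have h2 : (2 : ℕ) ^ j < 2 ^ k := Nat.pow_lt_pow_right (by norm_num) hkj
              rw [Nat.mod_eq_of_lt h2] at hnp
              exact hnp ⟨j, rfl⟩
          · right; exact ⟨hgx, hpg⟩
        · left; exact ⟨hfx, hpf⟩

theorem stmt6 : ¬ S (fun x => x + 1) := by
  intro h
  have hfin := key h
  have hinf : {x : ℕ | x < x + 1 ∧ ¬ ∃ k, x + 1 = 2 ^ k}.Infinite := by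
    apply Set.infinite_of_injective_forall_mem (f := fun m : ℕ => 4 * m + 2)
      (hi := fun a b hab => by simp only [] at hab; omega)
    intro m
    simp only [Set.mem_setOf_eq]
    refine ⟨by omega, ?_⟩
    rintro ⟨k, hk⟩
    rcases k with _ | k
    · simp at hk
    · have : (2 : ℕ) ^ (k + 1) % 2 = 0 := by
        simp [pow_succ, Nat.mul_mod]
      omega
  exact hinf hfin
end

section
/- Define h : ℕ × ℕ → ℕ by: h(x,y) = 2^x if x = y; h(x,y) = 3^(a+1) if y = 2^x (and x ≠ y), where a = x; h(x,y) = 5^(b+1) if x = 2^y (and x ≠ y and y ≠ 2^x), where b = y; h(x,y) = a + b if x = 3^(a+1) and y = 5^(b+1) for some a, b (and none of the previous cases hold); h(x,y) = a mod b if x = 5^(a+1) and y = 3^(b+1) for some a, b (and none of the previous cases hold); h(x,y) = 0 otherwise. Then for all natural numbers x and y: h(x,x) = 2^x, h(h(x,h(x,x)), h(h(y,y),y)) = x + y, and h(h(h(x,x),x), h(y,h(y,y))) = x mod y. -/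
open Classical in
noncomputable def h (x y : ℕ) : ℕ :=
  if x = y then 2 ^ x
  else if y = 2 ^ x then 3 ^ (x + 1)
  else if x = 2 ^ y then 5 ^ (y + 1)
  else if ∃ a b : ℕ, x = 3 ^ (a + 1) ∧ y = 5 ^ (b + 1) then
    (Nat.log 3 x - 1) + (Nat.log 5 y - 1)
  else if ∃ a b : ℕ, x = 5 ^ (a + 1) ∧ y = 3 ^ (b + 1) then
    (Nat.log 5 x - 1) % (Nat.log 3 y - 1)
  else 0

lemma aux_pow_ne {p q : ℕ} (hp : Nat.Prime p) (hq : Nat.Prime q) (hne : p ≠ q)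
    (a b : ℕ) : p ^ (a + 1) ≠ q ^ (b + 1) := by
  intro h
  have h1 : p ∣ q ^ (b + 1) := h ▸ dvd_pow_self p (Nat.succ_ne_zero a)
  have h2 := hp.dvd_of_dvd_pow h1
  exact hne ((Nat.prime_dvd_prime_iff_eq hp hq).mp h2)

lemma odd_ne_two_pow (m k : ℕ) (hm : ¬ 2 ∣ m) (hk : k ≠ 0) : m ≠ 2 ^ k := by
  intro h
  exact hm (h ▸ dvd_pow_self 2 hk)

lemma two_dvd_not_pow (r a : ℕ) (hr : r % 2 = 1) : ¬ 2 ∣ r ^ (a + 1) := by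
  intro h
  have := Nat.Prime.dvd_of_dvd_pow Nat.prime_two h
  omega

lemma h_self (x : ℕ) : h x x = 2 ^ x := by simp [h]

lemma h1 (x : ℕ) : h x (2 ^ x) = 3 ^ (x + 1) := by
  unfold h
  rw [if_neg (Nat.lt_two_pow_self (n := x)).ne, if_pos rfl]

lemma h2 (x : ℕ) : h (2 ^ x) x = 5 ^ (x + 1) := by
  unfold h
  have hx : x < 2 ^ (2 ^ x) := lt_of_lt_of_le (Nat.lt_two_pow_self (n := x))
    (Nat.pow_le_pow_right (by norm_num) (Nat.lt_two_pow_self (n := x)).le)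
  rw [if_neg (Nat.lt_two_pow_self (n := x)).ne', if_neg hx.ne, if_pos rfl]

lemma h3 (x y : ℕ) : h (3 ^ (x + 1)) (5 ^ (y + 1)) = x + y := by
  unfold h
  rw [if_neg (aux_pow_ne (by norm_num) (by norm_num) (by norm_num) x y),
    if_neg (odd_ne_two_pow _ _ (two_dvd_not_pow 5 y rfl) (by positivity)),
    if_neg (odd_ne_two_pow _ _ (two_dvd_not_pow 3 x rfl) (by positivity)),
    if_pos ⟨x, y, rfl, rfl⟩]
  rw [Nat.log_pow (by norm_num), Nat.log_pow (by norm_num)]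
  omega

lemma h4 (x y : ℕ) : h (5 ^ (x + 1)) (3 ^ (y + 1)) = x % y := by
  unfold h
  rw [if_neg (aux_pow_ne (by norm_num) (by norm_num) (by norm_num) x y),
    if_neg (odd_ne_two_pow _ _ (two_dvd_not_pow 3 y rfl) (by positivity)),
    if_neg (odd_ne_two_pow _ _ (two_dvd_not_pow 5 x rfl) (by positivity))]
  rw [if_neg, if_pos ⟨x, y, rfl, rfl⟩]
  · rw [Nat.log_pow (by norm_num), Nat.log_pow (by norm_num)]
    norm_num
  · rintro ⟨a, b, ha, -⟩
    exact aux_pow_ne (by norm_num) (by norm_num) (by norm_num) x a ha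

theorem stmt19 : ∀ x y : ℕ,
    h x x = 2 ^ x ∧
    h (h x (h x x)) (h (h y y) y) = x + y ∧
    h (h (h x x) x) (h y (h y y)) = x % y := by
  intro x y
  refine ⟨h_self x, ?_, ?_⟩
  · rw [h_self, h1, h_self, h2, h3]
  · rw [h_self, h2, h_self, h1, h4]
end
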